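/- arXiv:2601.08377 — 8 statements merged into one kernel-verified Lean document; each statement's English description precedes it below -/
import Mathlib

section
/- For any geodesic triangle ABC on the unit sphere, if D and E are the midpoints of the geodesic segments AB and BC respectively, then the spherical distance from D to E is strictly greater than half the spherical distance from A to C (assuming A, B, C are not all on one great circle and pairwise distances are less than π). -/
/-- Intrinsic (geodesic) distance on the unit sphere in `ℝ³`. -/
noncomputable def sphereDist (x y : EuclideanSpace ℝ (Fin 3)) : ℝ :=
  Real.arccos (inner ℝ x y : ℝ)

/-!
The midpoint of the arc `AB` is `(A + B) / ‖A + B‖`, and `cos (d(A, C) / 2) = ‖A + C‖ / 2`.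
Hence the claim amounts to `2 ⟪A + B, B + C⟫ < ‖A + B‖ ‖B + C‖ ‖A + C‖`. For unit vectors the
difference of the squares of the two sides is `4 det (gram A B C)`, which is positive because
`A, B, C` are linearly independent.
-/

open RealInnerProductSpace

section UnitVectors

variable {F : Type*} [NormedAddCommGroup F] [InnerProductSpace ℝ F] {a b c x y z : F}

lemma norm_add_sq_of_norm_eq_one (hx : ‖x‖ = 1) (hy : ‖y‖ = 1) :
    ‖x + y‖ ^ 2 = 2 * (1 + ⟪x, y⟫) := by
  rw [norm_add_sq_real, hx, hy]; ring

lemma cos_half_arccos_inner (hx : ‖x‖ = 1) (hy : ‖y‖ = 1) :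
    Real.cos (Real.arccos ⟪x, y⟫ / 2) = ‖x + y‖ / 2 := by
  obtain ⟨h₁, h₂⟩ := real_inner_mem_Icc_of_norm_eq_one hx hy
  rw [Real.cos_half (by linarith [Real.arccos_nonneg ⟪x, y⟫, Real.pi_pos])
    (Real.arccos_le_pi _), Real.cos_arccos h₁ h₂, ← Real.sqrt_sq (by positivity : 0 ≤ ‖x + y‖ / 2),
    div_pow, norm_add_sq_of_norm_eq_one hx hy]
  ring_nf

lemma arccos_inner_div_two (hx : ‖x‖ = 1) (hy : ‖y‖ = 1) :
    Real.arccos ⟪x, y⟫ / 2 = Real.arccos (‖x + y‖ / 2) := by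
  rw [← cos_half_arccos_inner hx hy, Real.arccos_cos
    (by linarith [Real.arccos_nonneg ⟪x, y⟫]) (by linarith [Real.arccos_le_pi ⟪x, y⟫, Real.pi_pos])]

lemma norm_add_smul_eq_add_of_arccos_inner_eq_half (hx : ‖x‖ = 1) (hy : ‖y‖ = 1) (hz : ‖z‖ = 1)
    (hxz : Real.arccos ⟪x, z⟫ = Real.arccos ⟪x, y⟫ / 2)
    (hzy : Real.arccos ⟪z, y⟫ = Real.arccos ⟪x, y⟫ / 2) :
    ‖x + y‖ • z = x + y := by
  have hzx' : ⟪z, x⟫ = ‖x + y‖ / 2 := by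
    rw [real_inner_comm, ← Real.cos_arccos (neg_one_le_real_inner_of_norm_eq_one hx hz)
      (real_inner_le_one_of_norm_eq_one hx hz), hxz, cos_half_arccos_inner hx hy]
  have hzy' : ⟪z, y⟫ = ‖x + y‖ / 2 := by
    rw [← Real.cos_arccos (neg_one_le_real_inner_of_norm_eq_one hz hy)
      (real_inner_le_one_of_norm_eq_one hz hy), hzy, cos_half_arccos_inner hx hy]
  have hcs : ⟪z, x + y⟫ = ‖z‖ * ‖x + y‖ := by
    rw [inner_add_right, hzx', hzy', hz]; ring
  simpa [hz] using inner_eq_norm_mul_iff_real.mp hcs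

lemma det_gram_pos_of_norm_eq_one (ha : ‖a‖ = 1) (hb : ‖b‖ = 1) (hc : ‖c‖ = 1)
    (hind : LinearIndependent ℝ ![a, b, c]) :
    0 < 1 + 2 * ⟪a, b⟫ * ⟪b, c⟫ * ⟪a, c⟫ - ⟪a, b⟫ ^ 2 - ⟪b, c⟫ ^ 2 - ⟪a, c⟫ ^ 2 := by
  have hdet := (Matrix.posDef_gram_of_linearIndependent hind).det_pos
  simp only [Matrix.det_fin_three, Matrix.gram, Matrix.of_apply, Matrix.cons_val,
    inner_self_eq_one_of_norm_eq_one ha, inner_self_eq_one_of_norm_eq_one hb,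
    inner_self_eq_one_of_norm_eq_one hc, real_inner_comm a b, real_inner_comm a c,
    real_inner_comm b c] at hdet
  linarith

lemma two_mul_inner_add_add_lt (ha : ‖a‖ = 1) (hb : ‖b‖ = 1) (hc : ‖c‖ = 1)
    (hind : LinearIndependent ℝ ![a, b, c]) :
    2 * ⟪a + b, b + c⟫ < ‖a + b‖ * ‖b + c‖ * ‖a + c‖ := by
  have hgram := det_gram_pos_of_norm_eq_one ha hb hc hind
  have hinner : ⟪a + b, b + c⟫ = 1 + ⟪a, b⟫ + ⟪b, c⟫ + ⟪a, c⟫ := by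
    rw [inner_add_left, inner_add_right, inner_add_right, inner_self_eq_one_of_norm_eq_one hb]
    ring
  refine lt_of_pow_lt_pow_left₀ 2 (by positivity) ?_
  rw [mul_pow, mul_pow, mul_pow, norm_add_sq_of_norm_eq_one ha hb,
    norm_add_sq_of_norm_eq_one hb hc, norm_add_sq_of_norm_eq_one ha hc, hinner]
  nlinarith [hgram]

end UnitVectors

theorem sphere_midpoint_inequality_general
    (A B C D E : EuclideanSpace ℝ (Fin 3))
    (hA : ‖A‖ = 1) (hB : ‖B‖ = 1) (hC : ‖C‖ = 1)
    (hind : LinearIndependent ℝ ![A, B, C])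
    (hD : ‖D‖ = 1)
    (hDA : sphereDist A D = sphereDist A B / 2)
    (hDB : sphereDist D B = sphereDist A B / 2)
    (hE : ‖E‖ = 1)
    (hEB : sphereDist B E = sphereDist B C / 2)
    (hEC : sphereDist E C = sphereDist B C / 2) :
    sphereDist D E > sphereDist A C / 2 := by
  unfold sphereDist at *
  have hD' := norm_add_smul_eq_add_of_arccos_inner_eq_half hA hB hD hDA hDB
  have hE' := norm_add_smul_eq_add_of_arccos_inner_eq_half hB hC hE hEB hEC
  have hDE : ⟪D, E⟫ < ‖A + C‖ / 2 := by
    have hinner : ⟪A + B, B + C⟫ = ‖A + B‖ * ‖B + C‖ * ⟪D, E⟫ := by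
      conv_lhs => rw [← hD', ← hE']
      rw [real_inner_smul_left, real_inner_smul_right, mul_assoc]
    have hneg : ‖A + B‖ * ‖B + C‖ * (2 * ⟪D, E⟫ - ‖A + C‖) < 0 := by
      linarith [two_mul_inner_add_add_lt hA hB hC hind]
    linarith [neg_of_mul_neg_right hneg (by positivity)]
  have hAC : ‖A + C‖ / 2 ≤ 1 := by linarith [norm_add_le A C]
  rw [gt_iff_lt, arccos_inner_div_two hA hC]
  exact Real.arccos_lt_arccos (neg_one_le_real_inner_of_norm_eq_one hD hE) hDE hAC

theorem sphere_midpoint_inequality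
    (A B C D E : EuclideanSpace ℝ (Fin 3))
    (hA : ‖A‖ = 1) (hB : ‖B‖ = 1) (hC : ‖C‖ = 1)
    (hind : LinearIndependent ℝ ![A, B, C])
    (hAB : sphereDist A B < Real.pi)
    (hBC : sphereDist B C < Real.pi)
    (hAC : sphereDist A C < Real.pi)
    (hD : ‖D‖ = 1)
    (hDA : sphereDist A D = sphereDist A B / 2)
    (hDB : sphereDist D B = sphereDist A B / 2)
    (hE : ‖E‖ = 1)
    (hEB : sphereDist B E = sphereDist B C / 2)
    (hEC : sphereDist E C = sphereDist B C / 2) :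
    sphereDist D E > sphereDist A C / 2 :=
  sphere_midpoint_inequality_general A B C D E hA hB hC hind hD hDA hDB hE hEB hEC
end

section
/- There is no map f from a subset U of the unit sphere with nonempty interior to the Euclidean plane that preserves distances up to a scale factor, i.e., there is no f : U → ℝ² and constant c > 0 such that dist(f(x), f(y)) = c · d_S(x, y) for all x, y ∈ U, where d_S is the intrinsic spherical distance. -/
open Real RealInnerProductSpace Module

section InnerProductSpace

variable {E : Type*} [NormedAddCommGroup E] [InnerProductSpace ℝ E]

noncomputable def greatCircle (x u : E) (t : ℝ) : E := cos t • x + sin t • u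

@[simp] lemma greatCircle_zero (x u : E) : greatCircle x u 0 = x := by
  simp [greatCircle]

variable {x u v : E}

lemma inner_greatCircle (hx : ‖x‖ = 1) (hxu : ⟪x, u⟫ = 0) (hxv : ⟪x, v⟫ = 0) (s t : ℝ) :
    ⟪greatCircle x u s, greatCircle x v t⟫ = cos s * cos t + sin s * sin t * ⟪u, v⟫ := by
  have hux : ⟪u, x⟫ = 0 := by rw [real_inner_comm, hxu]
  simp only [greatCircle, inner_add_left, inner_add_right, real_inner_smul_left,
    real_inner_smul_right, real_inner_self_eq_norm_sq, hx, hxv, hux]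
  ring

lemma inner_greatCircle_self (hx : ‖x‖ = 1) (hu : ‖u‖ = 1) (hxu : ⟪x, u⟫ = 0) (s t : ℝ) :
    ⟪greatCircle x u s, greatCircle x u t⟫ = cos (s - t) := by
  rw [inner_greatCircle hx hxu hxu, real_inner_self_eq_norm_sq, hu, cos_sub]
  ring

lemma norm_greatCircle (hx : ‖x‖ = 1) (hu : ‖u‖ = 1) (hxu : ⟪x, u⟫ = 0) (t : ℝ) :
    ‖greatCircle x u t‖ = 1 := by
  have h := inner_greatCircle_self hx hu hxu t t
  rw [sub_self, cos_zero, real_inner_self_eq_norm_sq] at h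
  exact (pow_left_inj₀ (norm_nonneg _) zero_le_one two_ne_zero).mp (by rw [h, one_pow])

lemma dist_greatCircle_le (hx : ‖x‖ = 1) (hu : ‖u‖ = 1) (hxu : ⟪x, u⟫ = 0) (t : ℝ) :
    dist (greatCircle x u t) x ≤ |t| := by
  have h : dist (greatCircle x u t) x ^ 2 = 2 - 2 * cos t := by
    have hinner : ⟪greatCircle x u t, x⟫ = cos t := by
      simpa using inner_greatCircle_self hx hu hxu t 0
    rw [dist_eq_norm, norm_sub_sq_real, hinner, norm_greatCircle hx hu hxu, hx]
    ring
  have hcos := one_sub_sq_div_two_le_cos (x := t)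
  rw [← abs_of_nonneg dist_nonneg, ← sq_le_sq]
  linarith

lemma exists_orthonormal_pair_orthogonal [FiniteDimensional ℝ E] (hE : 2 < finrank ℝ E)
    (hx : ‖x‖ = 1) : ∃ u v : E, ‖u‖ = 1 ∧ ‖v‖ = 1 ∧ ⟪x, u⟫ = 0 ∧ ⟪x, v⟫ = 0 ∧ ⟪v, u⟫ = 0 := by
  let i : Fin 3 → Fin (finrank ℝ E) := fun k => ⟨k, by omega⟩
  have hx' : Orthonormal ℝ (({i 0} : Set _).domRestrict fun _ => x) :=
    ⟨fun _ => hx, fun a b hab => absurd (Subtype.ext (a.2.trans b.2.symm)) hab⟩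
  obtain ⟨b, hb⟩ := hx'.exists_orthonormalBasis_extension_of_card_eq (by simp)
  have hb0 : b (i 0) = x := hb _ rfl
  have hon := orthonormal_iff_ite.mp b.orthonormal
  refine ⟨b (i 1), b (i 2), b.orthonormal.1 _, b.orthonormal.1 _, ?_, ?_, ?_⟩ <;>
    simp [i, ← hb0, hon]

lemma sq_eq_two_mul_sq_of_isosceles_right {p a b c : E} {ρ δ : ℝ} (hpa : dist p a = ρ)
    (hpb : dist p b = ρ) (hab : dist a b = 2 * ρ) (hpc : dist p c = ρ) (hca : dist c a = δ)
    (hcb : dist c b = δ) : δ ^ 2 = 2 * ρ ^ 2 := by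
  have hp : p = midpoint ℝ a b :=
    eq_midpoint_of_dist_eq_half (by rw [dist_comm, hpa, hab]; ring) (by rw [hpb, hab]; ring)
  have := EuclideanGeometry.dist_sq_add_dist_sq_eq_two_mul_dist_midpoint_sq_add_half_dist_sq c a b
  rw [← hp, hca, hcb, dist_comm, hpc, hab] at this
  linarith

end InnerProductSpace

lemma cos_lt_cos_sq_of_sq_eq_two_mul_sq {r d : ℝ} (hr : r ≠ 0) (hd : d ^ 2 = 2 * r ^ 2)
    (hd1 : |d| ≤ 1) : cos d < cos r ^ 2 := by
  have hcos_d : cos d ≤ 1 - d ^ 2 / 2 + |d| ^ 4 * (5 / 96) := by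
    linarith [(abs_le.mp (cos_bound hd1)).2]
  have hd4 : |d| ^ 4 = 4 * r ^ 4 := by
    rw [show |d| ^ 4 = (|d| ^ 2) ^ 2 by ring, sq_abs, hd]; ring
  have hr2 : r ^ 2 ≤ 1 / 2 := by nlinarith [sq_abs d, abs_nonneg d]
  have hcos_r : 0 ≤ 1 - r ^ 2 / 2 ∧ 1 - r ^ 2 / 2 ≤ cos r :=
    ⟨by linarith, one_sub_sq_div_two_le_cos⟩
  have hr4 : 0 < r ^ 4 := by positivity
  nlinarith [mul_le_mul hcos_r.2 hcos_r.2 hcos_r.1 (hcos_r.1.trans hcos_r.2)]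

section Sphere

variable {x u v : EuclideanSpace ℝ (Fin 3)}

lemma sphereDist_greatCircle (hx : ‖x‖ = 1) (hu : ‖u‖ = 1) (hxu : ⟪x, u⟫ = 0) {s t : ℝ}
    (h : |s - t| ≤ π) : sphereDist (greatCircle x u s) (greatCircle x u t) = |s - t| := by
  rw [sphereDist, inner_greatCircle_self hx hu hxu, ← cos_abs, arccos_cos (abs_nonneg _) h]

lemma sphereDist_greatCircle_of_orthogonal (hx : ‖x‖ = 1) (hxu : ⟪x, u⟫ = 0) (hxv : ⟪x, v⟫ = 0)
    (hvu : ⟪v, u⟫ = 0) (s t : ℝ) :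
    sphereDist (greatCircle x v s) (greatCircle x u t) = arccos (cos s * cos t) := by
  rw [sphereDist, inner_greatCircle hx hxv hxu, hvu, mul_zero, add_zero]

theorem not_scaled_isometry_on_greatCircle_cross {F : Type*} [NormedAddCommGroup F]
    [InnerProductSpace ℝ F] (hx : ‖x‖ = 1) (hu : ‖u‖ = 1) (hv : ‖v‖ = 1) (hxu : ⟪x, u⟫ = 0)
    (hxv : ⟪x, v⟫ = 0) (hvu : ⟪v, u⟫ = 0) {r : ℝ} (hr0 : 0 < r) (hr : r ≤ 1 / 2)
    {S : Set (EuclideanSpace ℝ (Fin 3))} (hSu : ∀ t, |t| ≤ r → greatCircle x u t ∈ S)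
    (hSv : ∀ t, |t| ≤ r → greatCircle x v t ∈ S) (f : EuclideanSpace ℝ (Fin 3) → F) {c : ℝ}
    (hc : c ≠ 0) : ¬ ∀ y ∈ S, ∀ z ∈ S, dist (f y) (f z) = c * sphereDist y z := by
  intro hf
  have hdist : ∀ w, ‖w‖ = 1 → ⟪x, w⟫ = 0 → (∀ t, |t| ≤ r → greatCircle x w t ∈ S) →
      ∀ s t, |s| ≤ r → |t| ≤ r →
        dist (f (greatCircle x w s)) (f (greatCircle x w t)) = c * |s - t| :=
    fun w hw hxw hSw s t hs ht => by
      rw [hf _ (hSw s hs) _ (hSw t ht), sphereDist_greatCircle hx hw hxw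
        (by linarith [abs_sub s t, pi_gt_three])]
  have hr' : |r| ≤ r := (abs_of_pos hr0).le
  have hr'' : |-r| ≤ r := by rwa [abs_neg]
  have h0 : |(0 : ℝ)| ≤ r := by simpa using hr0.le
  have hxa : dist (f x) (f (greatCircle x u r)) = c * r := by
    simpa [abs_of_pos hr0] using hdist u hu hxu hSu 0 r h0 hr'
  have hxb : dist (f x) (f (greatCircle x u (-r))) = c * r := by
    simpa [abs_of_pos hr0] using hdist u hu hxu hSu 0 (-r) h0 hr''
  have hxq : dist (f x) (f (greatCircle x v r)) = c * r := by
    simpa [abs_of_pos hr0] using hdist v hv hxv hSv 0 r h0 hr'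
  have hab : dist (f (greatCircle x u r)) (f (greatCircle x u (-r))) = 2 * (c * r) := by
    rw [hdist u hu hxu hSu r (-r) hr' hr'', sub_neg_eq_add, ← two_mul, abs_of_pos (by positivity)]
    ring
  set δ := arccos (cos r * cos r)
  have hqa : dist (f (greatCircle x v r)) (f (greatCircle x u r)) = c * δ := by
    rw [hf _ (hSv r hr') _ (hSu r hr'), sphereDist_greatCircle_of_orthogonal hx hxu hxv hvu]
  have hqb : dist (f (greatCircle x v r)) (f (greatCircle x u (-r))) = c * δ := by
    rw [hf _ (hSv r hr') _ (hSu (-r) hr''), sphereDist_greatCircle_of_orthogonal hx hxu hxv hvu,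
      cos_neg]
  have hδ : δ ^ 2 = 2 * r ^ 2 := by
    have h := sq_eq_two_mul_sq_of_isosceles_right hxa hxb hab hxq hqa hqb
    apply mul_left_cancel₀ (pow_ne_zero 2 hc)
    linear_combination h
  have hcos : cos δ = cos r ^ 2 := by
    rw [cos_arccos (by nlinarith [cos_sq_le_one r]) (by nlinarith [cos_sq_le_one r]), sq]
  have hδ1 : |δ| ≤ 1 := (sq_le_one_iff_abs_le_one δ).1 (by nlinarith)
  exact (cos_lt_cos_sq_of_sq_eq_two_mul_sq hr0.ne' hδ hδ1).ne hcos

end Sphere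

theorem no_scaled_isometry_of_sphere_subset
    (U : Set (EuclideanSpace ℝ (Fin 3)))
    (hU : U ⊆ Metric.sphere (0 : EuclideanSpace ℝ (Fin 3)) 1)
    (hint : ∃ x ∈ U, ∃ ε > (0 : ℝ),
      ∀ y ∈ Metric.sphere (0 : EuclideanSpace ℝ (Fin 3)) 1, dist y x < ε → y ∈ U)
    (f : EuclideanSpace ℝ (Fin 3) → EuclideanSpace ℝ (Fin 2)) :
    ¬ ∃ c > (0 : ℝ), ∀ x ∈ U, ∀ y ∈ U, dist (f x) (f y) = c * sphereDist x y := by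
  rintro ⟨c, hc, hf⟩
  obtain ⟨x, hxU, ε, hε, hball⟩ := hint
  have hx : ‖x‖ = 1 := by simpa using hU hxU
  obtain ⟨u, v, hu, hv, hxu, hxv, hvu⟩ := exists_orthonormal_pair_orthogonal (by simp) hx
  obtain ⟨r, hr0, hrε, hr⟩ : ∃ r, 0 < r ∧ r < ε ∧ r ≤ 1 / 2 :=
    ⟨min (ε / 2) (1 / 2), by positivity, by linarith [min_le_left (ε / 2) (1 / 2)],
      min_le_right _ _⟩
  have hmem : ∀ w, ‖w‖ = 1 → ⟪x, w⟫ = 0 → ∀ t, |t| ≤ r → greatCircle x w t ∈ U :=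
    fun w hw hxw t ht => hball _ (mem_sphere_zero_iff_norm.2 (norm_greatCircle hx hw hxw t))
      ((dist_greatCircle_le hx hw hxw t).trans_lt (ht.trans_lt hrε))
  exact not_scaled_isometry_on_greatCircle_cross hx hu hv hxu hxv hvu hr0 hr
    (hmem u hu hxu) (hmem v hv hxv) f hc.ne' hf
end

section
/- Define F(x,y,z) = ((1+z)^{1+y} (1-z)^{1-y}) / ((1+x)^{1+y} (1-x)^{1-y}). Fix y, z ∈ (-1,1). Then d²/dx² F(x,y,z) = 2 (1+z)^{1+y}(1-z)^{1-y} (1+x)^{-(y+3)} (1-x)^{-(3-y)} (3(x-y)² + 1 - y²), which is strictly positive for all x ∈ (-1,1); hence x ↦ F(x,y,z) is strictly convex on (-1,1). -/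
open Real

/-- `F(x,y,z) = ((1+z)^{1+y}(1-z)^{1-y}) / ((1+x)^{1+y}(1-x)^{1-y})`, real powers. -/
noncomputable def F (x y z : ℝ) : ℝ :=
  ((1 + z) ^ (1 + y) * (1 - z) ^ (1 - y)) / ((1 + x) ^ (1 + y) * (1 - x) ^ (1 - y))

noncomputable def Gaux (y z x : ℝ) : ℝ :=
  ((1 + z) ^ (1 + y) * (1 - z) ^ (1 - y)) *
    Real.exp (-((1 + y) * Real.log (1 + x)) - (1 - y) * Real.log (1 - x))

noncomputable def Daux (y x : ℝ) : ℝ := (1 - y) / (1 - x) - (1 + y) / (1 + x)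

lemma F_eq_Gaux (y z x : ℝ) (h1 : (0:ℝ) < 1 + x) (h2 : (0:ℝ) < 1 - x) :
    F x y z = Gaux y z x := by
  unfold F Gaux
  rw [Real.rpow_def_of_pos h1, Real.rpow_def_of_pos h2, div_eq_mul_inv, ← Real.exp_add,
    ← Real.exp_neg]
  congr 1
  ring

lemma hasDerivAt_Gaux (y z x : ℝ) (h1 : (0:ℝ) < 1 + x) (h2 : (0:ℝ) < 1 - x) :
    HasDerivAt (Gaux y z) (Gaux y z x * Daux y x) x := by
  have hl1 : HasDerivAt (fun t : ℝ => 1 + t) 1 x := by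
    simpa using (hasDerivAt_id x).const_add (1:ℝ)
  have hl2 : HasDerivAt (fun t : ℝ => 1 - t) (-1) x := by
    simpa using (hasDerivAt_id x).const_sub (1:ℝ)
  have hlog1 : HasDerivAt (fun t : ℝ => Real.log (1 + t)) (1 / (1 + x)) x := hl1.log h1.ne'
  have hlog2 : HasDerivAt (fun t : ℝ => Real.log (1 - t)) (-1 / (1 - x)) x := hl2.log h2.ne'
  have hφ : HasDerivAt
      (fun t : ℝ => -((1 + y) * Real.log (1 + t)) - (1 - y) * Real.log (1 - t))
      (-((1 + y) * (1 / (1 + x))) - (1 - y) * (-1 / (1 - x))) x :=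
    ((hlog1.const_mul (1 + y)).neg).sub (hlog2.const_mul (1 - y))
  have h := (hφ.exp).const_mul ((1 + z) ^ (1 + y) * (1 - z) ^ (1 - y))
  refine h.congr_deriv ?_
  unfold Gaux Daux
  field_simp
  ring

lemma hasDerivAt_Daux (y x : ℝ) (h1 : (0:ℝ) < 1 + x) (h2 : (0:ℝ) < 1 - x) :
    HasDerivAt (Daux y) ((1 - y) / (1 - x) ^ 2 + (1 + y) / (1 + x) ^ 2) x := by
  have hinv2 : HasDerivAt (fun t : ℝ => (1 - t)⁻¹) (1 / (1 - x) ^ 2) x := by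
    have h := ((hasDerivAt_id x).const_sub (1:ℝ)).inv h2.ne'
    refine h.congr_deriv ?_
    simp only [id_eq]
    field_simp
  have hinv1 : HasDerivAt (fun t : ℝ => (1 + t)⁻¹) (-(1 / (1 + x) ^ 2)) x := by
    have h := (((hasDerivAt_id x).const_add (1:ℝ))).inv h1.ne'
    refine h.congr_deriv ?_
    simp only [id_eq]
    field_simp
  have h := (hinv2.const_mul (1 - y)).sub (hinv1.const_mul (1 + y))
  refine h.congr_deriv ?_
  ring

theorem F_second_deriv_and_convex (y z : ℝ) (hy : y ∈ Set.Ioo (-1 : ℝ) 1)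
    (hz : z ∈ Set.Ioo (-1 : ℝ) 1) :
    (∀ x ∈ Set.Ioo (-1 : ℝ) 1,
        deriv (deriv (fun x => F x y z)) x =
          2 * (1 + z) ^ (1 + y) * (1 - z) ^ (1 - y) * (1 + x) ^ (-(y + 3)) *
            (1 - x) ^ (-(3 - y)) * (3 * (x - y) ^ 2 + 1 - y ^ 2) ∧
        0 < deriv (deriv (fun x => F x y z)) x) ∧
    StrictConvexOn ℝ (Set.Ioo (-1 : ℝ) 1) (fun x => F x y z) := by
  obtain ⟨hy1, hy2⟩ := hy
  obtain ⟨hz1, hz2⟩ := hz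
  have hz1' : (0:ℝ) < 1 + z := by linarith
  have hz2' : (0:ℝ) < 1 - z := by linarith
  have hIoo : IsOpen (Set.Ioo (-1 : ℝ) 1) := isOpen_Ioo
  -- first derivative
  have hF1 : ∀ x ∈ Set.Ioo (-1 : ℝ) 1,
      HasDerivAt (fun t => F t y z) (Gaux y z x * Daux y x) x := by
    intro x hx
    have h1 : (0:ℝ) < 1 + x := by linarith [hx.1]
    have h2 : (0:ℝ) < 1 - x := by linarith [hx.2]
    refine (hasDerivAt_Gaux y z x h1 h2).congr_of_eventuallyEq ?_
    filter_upwards [hIoo.mem_nhds hx] with t ht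
    exact F_eq_Gaux y z t (by linarith [ht.1]) (by linarith [ht.2])
  have hderiv1 : ∀ x ∈ Set.Ioo (-1 : ℝ) 1,
      deriv (fun t => F t y z) x = Gaux y z x * Daux y x := fun x hx => (hF1 x hx).deriv
  -- second derivative
  have hF2 : ∀ x ∈ Set.Ioo (-1 : ℝ) 1,
      HasDerivAt (deriv (fun t => F t y z))
        (Gaux y z x * Daux y x * Daux y x +
          Gaux y z x * ((1 - y) / (1 - x) ^ 2 + (1 + y) / (1 + x) ^ 2)) x := by
    intro x hx
    have h1 : (0:ℝ) < 1 + x := by linarith [hx.1]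
    have h2 : (0:ℝ) < 1 - x := by linarith [hx.2]
    have hG := hasDerivAt_Gaux y z x h1 h2
    have hD := hasDerivAt_Daux y x h1 h2
    refine (hG.mul hD).congr_of_eventuallyEq ?_
    filter_upwards [hIoo.mem_nhds hx] with t ht
    exact hderiv1 t ht
  have key : ∀ x ∈ Set.Ioo (-1 : ℝ) 1,
      deriv (deriv (fun x => F x y z)) x =
        2 * (1 + z) ^ (1 + y) * (1 - z) ^ (1 - y) * (1 + x) ^ (-(y + 3)) *
          (1 - x) ^ (-(3 - y)) * (3 * (x - y) ^ 2 + 1 - y ^ 2) := by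
    intro x hx
    have h1 : (0:ℝ) < 1 + x := by linarith [hx.1]
    have h2 : (0:ℝ) < 1 - x := by linarith [hx.2]
    rw [(hF2 x hx).deriv]
    have hexp : Real.exp (-((1 + y) * Real.log (1 + x)) - (1 - y) * Real.log (1 - x)) =
        (1 + x) ^ (-(1 + y)) * (1 - x) ^ (-(1 - y)) := by
      rw [Real.rpow_def_of_pos h1, Real.rpow_def_of_pos h2, ← Real.exp_add]
      congr 1
      ring
    have e1 : (1 + x) ^ (-(y + 3)) = (1 + x) ^ (-(1 + y)) * (1 + x) ^ ((-2 : ℝ)) := by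
      rw [← Real.rpow_add h1]; congr 1; ring
    have e2 : (1 - x) ^ (-(3 - y)) = (1 - x) ^ (-(1 - y)) * (1 - x) ^ ((-2 : ℝ)) := by
      rw [← Real.rpow_add h2]; congr 1; ring
    have e3 : (1 + x) ^ ((-2 : ℝ)) = ((1 + x) ^ 2)⁻¹ := by
      rw [show ((-2 : ℝ)) = ((-2 : ℤ) : ℝ) by norm_num, Real.rpow_intCast]
      simp [zpow_neg]
    have e4 : (1 - x) ^ ((-2 : ℝ)) = ((1 - x) ^ 2)⁻¹ := by
      rw [show ((-2 : ℝ)) = ((-2 : ℤ) : ℝ) by norm_num, Real.rpow_intCast]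
      simp [zpow_neg]
    unfold Gaux Daux
    rw [hexp, e1, e2, e3, e4]
    have hP : (1 + x) ^ (-(1 + y)) ≠ 0 := (Real.rpow_pos_of_pos h1 _).ne'
    have hQ : (1 - x) ^ (-(1 - y)) ≠ 0 := (Real.rpow_pos_of_pos h2 _).ne'
    field_simp
    ring
  have pos : ∀ x ∈ Set.Ioo (-1 : ℝ) 1, 0 < deriv (deriv (fun x => F x y z)) x := by
    intro x hx
    rw [key x hx]
    have h1 : (0:ℝ) < 1 + x := by linarith [hx.1]
    have h2 : (0:ℝ) < 1 - x := by linarith [hx.2]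
    have hlast : (0:ℝ) < 3 * (x - y) ^ 2 + 1 - y ^ 2 := by nlinarith [sq_nonneg (x - y)]
    have := mul_pos (mul_pos (mul_pos (mul_pos
      (mul_pos (by norm_num : (0:ℝ) < 2) (Real.rpow_pos_of_pos hz1' (1 + y)))
      (Real.rpow_pos_of_pos hz2' (1 - y)))
      (Real.rpow_pos_of_pos h1 (-(y + 3))))
      (Real.rpow_pos_of_pos h2 (-(3 - y)))) hlast
    linarith [this]
  refine ⟨fun x hx => ⟨key x hx, pos x hx⟩, ?_⟩
  have hcont : ContinuousOn (fun x => F x y z) (Set.Ioo (-1 : ℝ) 1) := by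
    apply ContinuousOn.div continuousOn_const
    · exact ((continuousOn_const.add continuousOn_id).rpow_const
        (fun x hx => Or.inl (by linarith [hx.1] : (1:ℝ) + x ≠ 0))).mul
        ((continuousOn_const.sub continuousOn_id).rpow_const
        (fun x hx => Or.inl (by linarith [hx.2] : (1:ℝ) - x ≠ 0)))
    · intro x hx
      exact (mul_pos (Real.rpow_pos_of_pos (by linarith [hx.1]) _)
        (Real.rpow_pos_of_pos (by linarith [hx.2]) _)).ne'
  refine strictConvexOn_of_deriv2_pos (convex_Ioo _ _) hcont ?_
  intro x hx
  rw [interior_Ioo] at hx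
  exact pos x hx
end

section
/- Define F(x,y,z) = ((1+z)^{1+y} (1-z)^{1-y}) / ((1+x)^{1+y} (1-x)^{1-y}). Fix y, z ∈ (-1,1). Then the function x ↦ F(x,y,z) on (-1,1) attains a strict global minimum at x = y; in particular F(x,y,z) > F(y,y,z) for all x ∈ (-1,1) with x ≠ y. -/
open Real

/-- Strict two-point weighted AM-GM. -/
lemma strict_amgm2 {a b w₁ w₂ : ℝ} (ha : 0 < a) (hb : 0 < b) (hab : a ≠ b)
    (hw₁ : 0 < w₁) (hw₂ : 0 < w₂) (hw : w₁ + w₂ = 1) :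
    a ^ w₁ * b ^ w₂ < w₁ * a + w₂ * b := by
  have hlog : w₁ * log a + w₂ * log b < log (w₁ * a + w₂ * b) := by
    have := strictConcaveOn_log_Ioi.2 (Set.mem_Ioi.2 ha) (Set.mem_Ioi.2 hb) hab hw₁ hw₂ hw
    simpa [smul_eq_mul] using this
  have h1 : a ^ w₁ * b ^ w₂ = Real.exp (w₁ * log a + w₂ * log b) := by
    rw [Real.exp_add, Real.rpow_def_of_pos ha, Real.rpow_def_of_pos hb, mul_comm (log a), mul_comm (log b)]
  have h2 : (0:ℝ) < w₁ * a + w₂ * b := by positivity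
  rw [h1, ← Real.exp_log h2]
  exact Real.exp_lt_exp.2 hlog

lemma denom_lt {x y : ℝ} (hx : x ∈ Set.Ioo (-1 : ℝ) 1) (hy : y ∈ Set.Ioo (-1 : ℝ) 1)
    (hxy : x ≠ y) :
    (1 + x) ^ (1 + y) * (1 - x) ^ (1 - y) < (1 + y) ^ (1 + y) * (1 - y) ^ (1 - y) := by
  obtain ⟨hx1, hx2⟩ := hx
  obtain ⟨hy1, hy2⟩ := hy
  have hpx1 : (0:ℝ) < 1 + x := by linarith
  have hpx2 : (0:ℝ) < 1 - x := by linarith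
  have hpy1 : (0:ℝ) < 1 + y := by linarith
  have hpy2 : (0:ℝ) < 1 - y := by linarith
  set a := (1 + x) / (1 + y) with ha_def
  set b := (1 - x) / (1 - y) with hb_def
  have ha : 0 < a := by positivity
  have hb : 0 < b := by positivity
  have hab : a ≠ b := by
    intro h
    apply hxy
    rw [ha_def, hb_def, div_eq_div_iff (by positivity) (by positivity)] at h
    nlinarith
  have hw₁ : (0:ℝ) < (1 + y) / 2 := by positivity
  have hw₂ : (0:ℝ) < (1 - y) / 2 := by positivity
  have hw : (1 + y) / 2 + (1 - y) / 2 = 1 := by ring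
  have key := strict_amgm2 ha hb hab hw₁ hw₂ hw
  have hsum : (1 + y) / 2 * a + (1 - y) / 2 * b = 1 := by
    rw [ha_def, hb_def]; field_simp; ring
  rw [hsum] at key
  -- square both sides
  have hL : 0 < a ^ ((1 + y) / 2) * b ^ ((1 - y) / 2) := by positivity
  have hsq : (a ^ ((1 + y) / 2) * b ^ ((1 - y) / 2)) * (a ^ ((1 + y) / 2) * b ^ ((1 - y) / 2))
      = a ^ (1 + y) * b ^ (1 - y) := by
    rw [mul_mul_mul_comm, ← Real.rpow_add ha, ← Real.rpow_add hb]
    norm_num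
  have key2 : a ^ (1 + y) * b ^ (1 - y) < 1 := by
    rw [← hsq]
    nlinarith
  have hdiv : a ^ (1 + y) * b ^ (1 - y)
      = ((1 + x) ^ (1 + y) * (1 - x) ^ (1 - y)) / ((1 + y) ^ (1 + y) * (1 - y) ^ (1 - y)) := by
    rw [ha_def, hb_def, Real.div_rpow hpx1.le hpy1.le, Real.div_rpow hpx2.le hpy2.le]
    ring
  rw [hdiv, div_lt_one (by positivity)] at key2
  exact key2

theorem F_strict_min_at_y (y z : ℝ) (hy : y ∈ Set.Ioo (-1 : ℝ) 1)
    (hz : z ∈ Set.Ioo (-1 : ℝ) 1) :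
    ∀ x ∈ Set.Ioo (-1 : ℝ) 1, x ≠ y → F y y z < F x y z := by
  intro x hx hxy
  have hN : (0:ℝ) < (1 + z) ^ (1 + y) * (1 - z) ^ (1 - y) := by
    have h1 : (0:ℝ) < 1 + z := by linarith [hz.1]
    have h2 : (0:ℝ) < 1 - z := by linarith [hz.2]
    positivity
  have hDx : (0:ℝ) < (1 + x) ^ (1 + y) * (1 - x) ^ (1 - y) := by
    have h1 : (0:ℝ) < 1 + x := by linarith [hx.1]
    have h2 : (0:ℝ) < 1 - x := by linarith [hx.2]
    positivity
  have hlt := denom_lt hx hy hxy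
  exact div_lt_div_of_pos_left hN hDx hlt
end

section
/- Define F(x,y,z) = ((1+z)^{1+y} (1-z)^{1-y}) / ((1+x)^{1+y} (1-x)^{1-y}). Fix z ∈ (-1,1). Then the function x ↦ F(x,x,z) is strictly increasing on (-1,z) and strictly decreasing on (z,1). -/
open Real

/-!
`log F(x,x,z) = logFDiag z x` has derivative `logRatio z - logRatio x` in `x`, and `logRatio` is
strictly increasing on `(-1,1)`; so the derivative is positive for `x < z` and negative for `x > z`.
-/

open Set

noncomputable def logFDiag (z x : ℝ) : ℝ :=
  (1 + x) * log (1 + z) + (1 - x) * log (1 - z) - (1 + x) * log (1 + x) - (1 - x) * log (1 - x)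

noncomputable def logRatio (t : ℝ) : ℝ :=
  log (1 + t) - log (1 - t)

lemma F_self_eq_exp_logFDiag {x z : ℝ} (hx : x ∈ Ioo (-1) 1) (hz : z ∈ Ioo (-1) 1) :
    F x x z = exp (logFDiag z x) := by
  have h₁ : 0 < 1 + x := by linarith [hx.1]
  have h₂ : 0 < 1 - x := by linarith [hx.2]
  have h₃ : 0 < 1 + z := by linarith [hz.1]
  have h₄ : 0 < 1 - z := by linarith [hz.2]
  rw [F, logFDiag, rpow_def_of_pos h₁, rpow_def_of_pos h₂, rpow_def_of_pos h₃,
    rpow_def_of_pos h₄, ← exp_add, ← exp_add, ← exp_sub]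
  ring_nf

lemma strictMonoOn_logRatio : StrictMonoOn logRatio (Ioo (-1) 1) := by
  intro a ha b hb hab
  have h₁ : log (1 + a) < log (1 + b) := log_lt_log (by linarith [ha.1]) (by linarith)
  have h₂ : log (1 - b) < log (1 - a) := log_lt_log (by linarith [hb.2]) (by linarith)
  rw [logRatio, logRatio]
  linarith

lemma hasDerivAt_logFDiag (z : ℝ) {x : ℝ} (hx : x ∈ Ioo (-1) 1) :
    HasDerivAt (logFDiag z) (logRatio z - logRatio x) x := by
  have h₁ : 1 + x ≠ 0 := by linarith [hx.1]
  have h₂ : 1 - x ≠ 0 := by linarith [hx.2]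
  have hplus : HasDerivAt (fun x : ℝ => 1 + x) 1 x := (hasDerivAt_id x).const_add 1
  have hminus : HasDerivAt (fun x : ℝ => 1 - x) (-1) x := (hasDerivAt_id x).const_sub 1
  have := (((hplus.mul_const (log (1 + z))).add (hminus.mul_const (log (1 - z)))).sub
    ((hasDerivAt_mul_log h₁).comp x hplus)).sub ((hasDerivAt_mul_log h₂).comp x hminus)
  exact this.congr_deriv (by rw [logRatio, logRatio]; ring)

lemma strictMonoOn_logFDiag {z : ℝ} (hz : z < 1) : StrictMonoOn (logFDiag z) (Ioo (-1) z) := by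
  have hsub : Ioo (-1) z ⊆ Ioo (-1) 1 := Ioo_subset_Ioo_right hz.le
  refine strictMonoOn_of_hasDerivWithinAt_pos (convex_Ioo _ _)
    (f' := fun x => logRatio z - logRatio x)
    (HasDerivAt.continuousOn fun x hx => hasDerivAt_logFDiag z (hsub hx)) ?_ ?_ <;>
    rw [interior_Ioo]
  · exact fun x hx => (hasDerivAt_logFDiag z (hsub hx)).hasDerivWithinAt
  · exact fun x hx => sub_pos.2 (strictMonoOn_logRatio (hsub hx) ⟨hx.1.trans hx.2, hz⟩ hx.2)

lemma strictAntiOn_logFDiag {z : ℝ} (hz : -1 < z) : StrictAntiOn (logFDiag z) (Ioo z 1) := by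
  have hsub : Ioo z 1 ⊆ Ioo (-1) 1 := Ioo_subset_Ioo_left hz.le
  refine strictAntiOn_of_hasDerivWithinAt_neg (convex_Ioo _ _)
    (f' := fun x => logRatio z - logRatio x)
    (HasDerivAt.continuousOn fun x hx => hasDerivAt_logFDiag z (hsub hx)) ?_ ?_ <;>
    rw [interior_Ioo]
  · exact fun x hx => (hasDerivAt_logFDiag z (hsub hx)).hasDerivWithinAt
  · exact fun x hx => sub_neg.2 (strictMonoOn_logRatio ⟨hz, hx.1.trans hx.2⟩ (hsub hx) hx.1)

theorem F_diag_monotone (z : ℝ) (hz : z ∈ Set.Ioo (-1 : ℝ) 1) :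
    StrictMonoOn (fun x => F x x z) (Set.Ioo (-1 : ℝ) z) ∧
    StrictAntiOn (fun x => F x x z) (Set.Ioo z 1) := by
  constructor
  · refine (exp_strictMono.comp_strictMonoOn (strictMonoOn_logFDiag hz.2)).congr fun x hx => ?_
    exact (F_self_eq_exp_logFDiag ⟨hx.1, hx.2.trans hz.2⟩ hz).symm
  · refine (exp_strictMono.comp_strictAntiOn (strictAntiOn_logFDiag hz.1)).congr fun x hx => ?_
    exact (F_self_eq_exp_logFDiag ⟨hz.1.trans hx.1, hx.2⟩ hz).symm
end

section
/- Define F(x,y,z) = ((1+z)^{1+y} (1-z)^{1-y}) / ((1+x)^{1+y} (1-x)^{1-y}). For -1 < ρ₁ < ρ₂ < 1, there exists a unique a₀ ∈ (-1,1) with F(ρ₂,a₀,ρ₁) = 1, and moreover this a₀ satisfies ρ₁ < a₀ < ρ₂. -/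
open Real

theorem F_exists_unique_root (ρ₁ ρ₂ : ℝ) (h1 : -1 < ρ₁) (h2 : ρ₁ < ρ₂) (h3 : ρ₂ < 1) :
    ∃ a₀ : ℝ, (ρ₁ < a₀ ∧ a₀ < ρ₂ ∧ F ρ₂ a₀ ρ₁ = 1) ∧
      ∀ a ∈ Set.Ioo (-1 : ℝ) 1, F ρ₂ a ρ₁ = 1 → a = a₀ := by
  have p1 : (0:ℝ) < 1 + ρ₁ := by linarith
  have p2 : (0:ℝ) < 1 + ρ₂ := by linarith
  have m1 : (0:ℝ) < 1 - ρ₁ := by linarith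
  have m2 : (0:ℝ) < 1 - ρ₂ := by linarith
  set A : ℝ := Real.log (1 + ρ₂) - Real.log (1 + ρ₁) with hA
  set B : ℝ := Real.log (1 - ρ₁) - Real.log (1 - ρ₂) with hB
  have hApos : 0 < A := sub_pos.2 (Real.log_lt_log p1 (by linarith))
  have hBpos : 0 < B := sub_pos.2 (Real.log_lt_log m2 (by linarith))
  have hABpos : 0 < A + B := by linarith
  -- key log inequalities
  have key1 : (1 + ρ₁) * A < (1 - ρ₁) * B := by
    have l1 : Real.log ((1 + ρ₂) / (1 + ρ₁)) < (1 + ρ₂) / (1 + ρ₁) - 1 :=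
      Real.log_lt_sub_one_of_pos (by positivity)
        (ne_of_gt ((one_lt_div p1).2 (by linarith)))
    have l2 : Real.log ((1 - ρ₂) / (1 - ρ₁)) < (1 - ρ₂) / (1 - ρ₁) - 1 :=
      Real.log_lt_sub_one_of_pos (by positivity)
        (ne_of_lt ((div_lt_one m1).2 (by linarith)))
    rw [Real.log_div (by linarith) (by linarith)] at l1 l2
    have e1 : (1 + ρ₁) * ((1 + ρ₂) / (1 + ρ₁)) = 1 + ρ₂ := by field_simp
    have e2 : (1 - ρ₁) * ((1 - ρ₂) / (1 - ρ₁)) = 1 - ρ₂ := by field_simp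
    nlinarith [mul_lt_mul_of_pos_left l1 p1, mul_lt_mul_of_pos_left l2 m1]
  have key2 : (1 - ρ₂) * B < (1 + ρ₂) * A := by
    have l1 : Real.log ((1 + ρ₁) / (1 + ρ₂)) < (1 + ρ₁) / (1 + ρ₂) - 1 :=
      Real.log_lt_sub_one_of_pos (by positivity)
        (ne_of_lt ((div_lt_one p2).2 (by linarith)))
    have l2 : Real.log ((1 - ρ₁) / (1 - ρ₂)) < (1 - ρ₁) / (1 - ρ₂) - 1 :=
      Real.log_lt_sub_one_of_pos (by positivity)
        (ne_of_gt ((one_lt_div m2).2 (by linarith)))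
    rw [Real.log_div (by linarith) (by linarith)] at l1 l2
    have e1 : (1 + ρ₂) * ((1 + ρ₁) / (1 + ρ₂)) = 1 + ρ₁ := by field_simp
    have e2 : (1 - ρ₂) * ((1 - ρ₁) / (1 - ρ₂)) = 1 - ρ₁ := by field_simp
    nlinarith [mul_lt_mul_of_pos_left l1 p2, mul_lt_mul_of_pos_left l2 m2]
  -- characterization of the equation
  have hiff : ∀ a : ℝ, F ρ₂ a ρ₁ = 1 ↔ a * (A + B) = B - A := by
    intro a
    have dpos : 0 < (1 + ρ₂) ^ (1 + a) * (1 - ρ₂) ^ (1 - a) := by positivity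
    have npos : 0 < (1 + ρ₁) ^ (1 + a) * (1 - ρ₁) ^ (1 - a) := by positivity
    unfold F
    rw [div_eq_one_iff_eq (ne_of_gt dpos)]
    constructor
    · intro h
      have := congrArg Real.log h
      rw [Real.log_mul (by positivity) (by positivity),
        Real.log_mul (by positivity) (by positivity),
        Real.log_rpow p1, Real.log_rpow m1, Real.log_rpow p2, Real.log_rpow m2] at this
      rw [hA, hB]; ring_nf; ring_nf at this; linarith
    · intro h
      have heq : (1 + a) * Real.log (1 + ρ₁) + (1 - a) * Real.log (1 - ρ₁)
          = (1 + a) * Real.log (1 + ρ₂) + (1 - a) * Real.log (1 - ρ₂) := by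
        rw [hA, hB] at h; ring_nf; ring_nf at h; linarith
      rw [Real.rpow_def_of_pos p1, Real.rpow_def_of_pos m1, Real.rpow_def_of_pos p2,
        Real.rpow_def_of_pos m2, ← Real.exp_add, ← Real.exp_add]
      exact congrArg Real.exp (by ring_nf; ring_nf at heq; linarith)
  refine ⟨(B - A) / (A + B), ⟨?_, ?_, ?_⟩, ?_⟩
  · rw [lt_div_iff₀ hABpos]; nlinarith
  · rw [div_lt_iff₀ hABpos]; nlinarith
  · rw [hiff]; field_simp
  · intro a _ ha
    rw [hiff] at ha
    field_simp
    linarith [ha]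
end

section
/- Define L(ρ, α, ρ₀) = √( ((1-ρ₀)^{1-sin α} (1+ρ₀)^{1+sin α}) / ((1-ρ)^{1-sin α} (1+ρ)^{1+sin α}) ) for ρ, ρ₀ ∈ (-1,1) and α ∈ (0, π/2), and δ(ρ₁, ρ₂, α, ρ₀) = log( sup_{ρ₁<ρ<ρ₂} L(ρ,α,ρ₀) / inf_{ρ₁<ρ<ρ₂} L(ρ,α,ρ₀) ). For fixed -1 < ρ₁ < ρ₂ < 1 with ρ₀ = ρ₁, the distortion δ(ρ₁, ρ₂, α, ρ₁) attains its minimum over α ∈ (0, π/2) at α = α₀ if and only if L(ρ₂, α₀, ρ₁) = 1; and in that case ρ₁ < sin α₀ < ρ₂. -/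
/-!
Write `s = sin α` and `ℓ(ρ) = log L(ρ, α, ρ₁)`. As a function of `ρ`, `ℓ` decreases up to `ρ = s`
and increases afterwards, so on `[ρ₁, ρ₂]` its maximum is `max 0 (ℓ ρ₂)` and its minimum is taken at
the projection of `s` onto `[ρ₁, ρ₂]`; `δ` is the difference of the two. For fixed `ρ, ρ'` the
difference `ℓ ρ - ℓ ρ'` is affine in `s` with slope `artanh ρ' - artanh ρ`. Hence `ℓ ρ₂` is strictly
decreasing in `s`; by Gibbs' inequality it is positive at `s = ρ₁` and negative at `s = ρ₂`, so it
vanishes at a unique `s* ∈ (ρ₁, ρ₂)`. Evaluating these affine functions at the point where the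
minimum of `ℓ` is attained shows that `δ` strictly decreases in `s` on `s ≤ s*` and strictly
increases on `s ≥ s*`. So `s*` is the only possible minimiser, and `L(ρ₂, α₀, ρ₁) = 1` says exactly
that `sin α₀ = s*`.
-/

open Real

/-- The infinitesimal Lipschitz constant of the normalized Lambert conical projection. -/
noncomputable def L (ρ α ρ₀ : ℝ) : ℝ :=
  Real.sqrt (((1 - ρ₀) ^ (1 - Real.sin α) * (1 + ρ₀) ^ (1 + Real.sin α)) /
    ((1 - ρ) ^ (1 - Real.sin α) * (1 + ρ) ^ (1 + Real.sin α)))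

/-- The distortion `δ(ρ₁,ρ₂,α,ρ₀) = log(sup L / inf L)` over `ρ ∈ (ρ₁,ρ₂)`. -/
noncomputable def δ (ρ₁ ρ₂ α ρ₀ : ℝ) : ℝ :=
  Real.log (sSup ((fun ρ => L ρ α ρ₀) '' Set.Ioo ρ₁ ρ₂) /
    sInf ((fun ρ => L ρ α ρ₀) '' Set.Ioo ρ₁ ρ₂))

open Set

noncomputable def logL (p s ρ : ℝ) : ℝ :=
  ((1 - s) * (log (1 - p) - log (1 - ρ)) + (1 + s) * (log (1 + p) - log (1 + ρ))) / 2

theorem L_eq_exp_logL {p ρ : ℝ} (α : ℝ) (hp : p ∈ Ioo (-1) 1) (hρ : ρ ∈ Ioo (-1) 1) :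
    L ρ α p = exp (logL p (sin α) ρ) := by
  obtain ⟨hp₁, hp₂⟩ := hp
  obtain ⟨hρ₁, hρ₂⟩ := hρ
  have h1p : 0 < 1 - p := by linarith
  have h2p : 0 < 1 + p := by linarith
  have h1ρ : 0 < 1 - ρ := by linarith
  have h2ρ : 0 < 1 + ρ := by linarith
  have hnum := mul_pos (rpow_pos_of_pos h1p (1 - sin α)) (rpow_pos_of_pos h2p (1 + sin α))
  have hden := mul_pos (rpow_pos_of_pos h1ρ (1 - sin α)) (rpow_pos_of_pos h2ρ (1 + sin α))
  rw [L, sqrt_eq_rpow, rpow_def_of_pos (div_pos hnum hden), log_div hnum.ne' hden.ne',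
    log_mul (rpow_pos_of_pos h1p _).ne' (rpow_pos_of_pos h2p _).ne',
    log_mul (rpow_pos_of_pos h1ρ _).ne' (rpow_pos_of_pos h2ρ _).ne',
    log_rpow h1p, log_rpow h2p, log_rpow h1ρ, log_rpow h2ρ, logL]
  ring_nf

@[simp]
theorem logL_self (p s : ℝ) : logL p s p = 0 := by simp [logL]

theorem logL_sub_logL (p q r s : ℝ) : logL p s r - logL p s q = logL q s r := by
  unfold logL; ring

theorem logL_swap (p q s : ℝ) : logL q s p = -logL p s q := by
  simpa using (logL_sub_logL p q p s).symm

section DependenceOnS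

variable {a b : ℝ}

theorem artanh_eq_half_sub_log {x : ℝ} (hx : x ∈ Ioo (-1) 1) :
    artanh x = (log (1 + x) - log (1 - x)) / 2 := by
  rw [artanh_eq_half_log (Ioo_subset_Icc_self hx),
    log_div (by linarith [hx.1]) (by linarith [hx.2])]
  ring

theorem logL_eq_add_mul_artanh (ha : a ∈ Ioo (-1) 1) (hb : b ∈ Ioo (-1) 1) (s : ℝ) :
    logL a s b = logL a 0 b + s * (artanh a - artanh b) := by
  rw [artanh_eq_half_sub_log ha, artanh_eq_half_sub_log hb]
  unfold logL; ring

theorem strictAnti_logL (ha : -1 < a) (hab : a < b) (hb : b < 1) :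
    StrictAnti fun s ↦ logL a s b := by
  intro s t hst
  have ha' : a ∈ Ioo (-1) 1 := ⟨ha, hab.trans hb⟩
  have hb' : b ∈ Ioo (-1) 1 := ⟨ha.trans hab, hb⟩
  dsimp only
  rw [logL_eq_add_mul_artanh ha' hb' s, logL_eq_add_mul_artanh ha' hb' t]
  nlinarith [artanh_lt_artanh ha hb hab]

theorem continuous_logL (a b : ℝ) : Continuous fun s ↦ logL a s b := by
  unfold logL; fun_prop

theorem sub_lt_mul_sub_log {x y : ℝ} (hx : 0 < x) (hy : 0 < y) (hxy : x ≠ y) :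
    x - y < x * (log x - log y) := by
  have h := log_lt_sub_one_of_pos (div_pos hy hx)
    (by rwa [ne_eq, div_eq_one_iff_eq hx.ne', eq_comm])
  rw [log_div hy.ne' hx.ne'] at h
  have hmul : x * (y / x - 1) = y - x := by field_simp
  nlinarith

theorem logL_at_self_pos (ha : a ∈ Ioo (-1) 1) (hb : b ∈ Ioo (-1) 1) (hab : a ≠ b) :
    0 < logL a a b := by
  obtain ⟨ha₁, ha₂⟩ := ha
  obtain ⟨hb₁, hb₂⟩ := hb
  have h₁ := sub_lt_mul_sub_log (x := 1 - a) (y := 1 - b) (by linarith) (by linarith)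
    (by contrapose! hab; linarith)
  have h₂ := sub_lt_mul_sub_log (x := 1 + a) (y := 1 + b) (by linarith) (by linarith)
    (by contrapose! hab; linarith)
  unfold logL
  linarith

theorem exists_logL_eq_zero (ha : -1 < a) (hab : a < b) (hb : b < 1) :
    ∃ c ∈ Ioo a b, logL a c b = 0 := by
  have hpos : 0 < logL a a b :=
    logL_at_self_pos ⟨ha, hab.trans hb⟩ ⟨ha.trans hab, hb⟩ hab.ne
  have hneg : logL a b b < 0 := by
    rw [← neg_pos, ← logL_swap]
    exact logL_at_self_pos ⟨ha.trans hab, hb⟩ ⟨ha, hab.trans hb⟩ hab.ne'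
  exact intermediate_value_Ioo' hab.le (continuous_logL a b).continuousOn ⟨hneg, hpos⟩

end DependenceOnS

section DependenceOnRho

theorem hasDerivAt_logL (p s : ℝ) {ρ : ℝ} (hρ : ρ ∈ Ioo (-1) 1) :
    HasDerivAt (logL p s) ((ρ - s) / ((1 - ρ) * (1 + ρ))) ρ := by
  have h₁ : 1 - ρ ≠ 0 := by linarith [hρ.2]
  have h₂ : 1 + ρ ≠ 0 := by linarith [hρ.1]
  have d₁ := (((hasDerivAt_id ρ).const_sub 1).log h₁).const_sub (log (1 - p))
  have d₂ := (((hasDerivAt_id ρ).const_add 1).log h₂).const_sub (log (1 + p))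
  refine (((d₁.const_mul (1 - s)).add (d₂.const_mul (1 + s))).div_const 2).congr_deriv ?_
  simp only [id]
  field_simp
  ring

theorem continuousOn_logL (p s : ℝ) : ContinuousOn (logL p s) (Ioo (-1) 1) :=
  fun _ hρ ↦ (hasDerivAt_logL p s hρ).continuousAt.continuousWithinAt

theorem strictAntiOn_logL (p s : ℝ) : StrictAntiOn (logL p s) (Ioo (-1) 1 ∩ Iic s) := by
  refine strictAntiOn_of_deriv_neg ((convex_Ioo _ _).inter (convex_Iic _))
    ((continuousOn_logL p s).mono inter_subset_left) fun ρ hρ ↦ ?_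
  rw [interior_inter, interior_Ioo, interior_Iic] at hρ
  obtain ⟨⟨hρ₁, hρ₂⟩, hρs⟩ := hρ
  rw [(hasDerivAt_logL p s ⟨hρ₁, hρ₂⟩).deriv]
  exact div_neg_of_neg_of_pos (by linarith [mem_Iio.mp hρs]) (by nlinarith)

theorem strictMonoOn_logL (p s : ℝ) : StrictMonoOn (logL p s) (Ioo (-1) 1 ∩ Ici s) := by
  refine strictMonoOn_of_deriv_pos ((convex_Ioo _ _).inter (convex_Ici _))
    ((continuousOn_logL p s).mono inter_subset_left) fun ρ hρ ↦ ?_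
  rw [interior_inter, interior_Ioo, interior_Ici] at hρ
  obtain ⟨⟨hρ₁, hρ₂⟩, hρs⟩ := hρ
  rw [(hasDerivAt_logL p s ⟨hρ₁, hρ₂⟩).deriv]
  exact div_pos (by linarith [mem_Ioi.mp hρs]) (by nlinarith)

theorem logL_le_logL_of_mem_uIcc {p s ρ ρ' : ℝ} (hρ : ρ ∈ Ioo (-1) 1) (hρ' : ρ' ∈ Ioo (-1) 1)
    (h : ρ' ∈ uIcc s ρ) : logL p s ρ' ≤ logL p s ρ := by
  rcases le_total s ρ with hsρ | hρs
  · rw [uIcc_of_le hsρ] at h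
    exact (strictMonoOn_logL p s).monotoneOn ⟨hρ', h.1⟩ ⟨hρ, hsρ⟩ h.2
  · rw [uIcc_of_ge hρs] at h
    exact (strictAntiOn_logL p s).antitoneOn ⟨hρ, hρs⟩ ⟨hρ', h.2⟩ h.1

end DependenceOnRho

theorem max_min_mem_uIcc {p q s ρ : ℝ} (hρ : ρ ∈ Icc p q) : max p (min s q) ∈ uIcc s ρ := by
  rw [mem_uIcc]
  grind

section ExtremaOnIcc

variable {p q r s : ℝ}

theorem isLeast_logL_image_Icc (hp : -1 < p) (hpq : p ≤ q) (hq : q < 1) :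
    IsLeast (logL r s '' Icc p q) (logL r s (max p (min s q))) := by
  have hsub : Icc p q ⊆ Ioo (-1) 1 := Icc_subset_Ioo hp hq
  have hm : max p (min s q) ∈ Icc p q := ⟨le_max_left _ _, max_le hpq (min_le_right _ _)⟩
  exact ⟨mem_image_of_mem _ hm, forall_mem_image.2 fun ρ hρ ↦
    logL_le_logL_of_mem_uIcc (hsub hρ) (hsub hm) (max_min_mem_uIcc hρ)⟩

theorem isGreatest_logL_image_Icc (hp : -1 < p) (hpq : p ≤ q) (hq : q < 1) :
    IsGreatest (logL r s '' Icc p q) (max (logL r s p) (logL r s q)) := by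
  have hsub : Icc p q ⊆ Ioo (-1) 1 := Icc_subset_Ioo hp hq
  refine ⟨?_, forall_mem_image.2 fun ρ hρ ↦ ?_⟩
  · rcases max_choice (logL r s p) (logL r s q) with h | h <;> rw [h]
    exacts [mem_image_of_mem _ (left_mem_Icc.2 hpq), mem_image_of_mem _ (right_mem_Icc.2 hpq)]
  · rcases le_total s ρ with hsρ | hρs
    · exact le_max_of_le_right <| logL_le_logL_of_mem_uIcc (hsub (right_mem_Icc.2 hpq))
        (hsub hρ) (mem_uIcc_of_le hsρ hρ.2)
    · exact le_max_of_le_left <| logL_le_logL_of_mem_uIcc (hsub (left_mem_Icc.2 hpq))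
        (hsub hρ) (mem_uIcc_of_ge hρ.1 hρs)

end ExtremaOnIcc

section Closure

variable {X α : Type*} [TopologicalSpace X] [TopologicalSpace α] [LinearOrder α]
  [OrderTopology α] {f : X → α} {s : Set X} {a : α}

theorem IsGreatest.isLUB_image_of_closure (hf : ContinuousOn f (closure s))
    (h : IsGreatest (f '' closure s) a) : IsLUB (f '' s) a :=
  isLUB_of_mem_closure (image_mono subset_closure |>.trans h.2) (hf.image_closure h.1)

theorem IsLeast.isGLB_image_of_closure (hf : ContinuousOn f (closure s))
    (h : IsLeast (f '' closure s) a) : IsGLB (f '' s) a :=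
  isGLB_of_mem_closure (image_mono subset_closure |>.trans h.2) (hf.image_closure h.1)

end Closure

noncomputable def distortion (p q s : ℝ) : ℝ :=
  max 0 (logL p s q) - logL p s (max p (min s q))

section Distortion

variable {p q c : ℝ}

theorem δ_eq_distortion (hp : -1 < p) (hpq : p < q) (hq : q < 1) (α : ℝ) :
    δ p q α p = distortion p q (sin α) := by
  have hsub : Icc p q ⊆ Ioo (-1) 1 := Icc_subset_Ioo hp hq
  have hL : EqOn (fun ρ ↦ L ρ α p) (exp ∘ logL p (sin α)) (Icc p q) :=
    fun ρ hρ ↦ L_eq_exp_logL α (hsub (left_mem_Icc.2 hpq.le)) (hsub hρ)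
  have hcont : ContinuousOn (fun ρ ↦ L ρ α p) (closure (Ioo p q)) := by
    rw [closure_Ioo hpq.ne]
    exact (continuous_exp.comp_continuousOn ((continuousOn_logL p _).mono hsub)).congr hL
  have himage :
      (fun ρ ↦ L ρ α p) '' closure (Ioo p q) = exp '' (logL p (sin α) '' Icc p q) := by
    rw [closure_Ioo hpq.ne, hL.image_eq, image_comp]
  have hne := (nonempty_Ioo.2 hpq).image fun ρ ↦ L ρ α p
  have hsup := exp_monotone.map_isGreatest
    (isGreatest_logL_image_Icc (r := p) (s := sin α) hp hpq.le hq)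
  have hinf := exp_monotone.map_isLeast
    (isLeast_logL_image_Icc (r := p) (s := sin α) hp hpq.le hq)
  rw [← himage] at hsup hinf
  rw [δ, (hsup.isLUB_image_of_closure hcont).csSup_eq hne,
    (hinf.isGLB_image_of_closure hcont).csInf_eq hne, ← exp_sub, log_exp, logL_self,
    distortion]

theorem distortion_strictAntiOn (hp : -1 < p) (hpq : p < q) (hq : q < 1) (hcq : c < q)
    (hc : logL p c q = 0) : StrictAntiOn (distortion p q) (Iic c) := by
  intro t _ u hu htu
  have hΦ : 0 ≤ logL p u q := hc ▸ (strictAnti_logL hp hpq hq).antitone hu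
  have hm : max p (min u q) ∈ Icc p q := ⟨le_max_left _ _, max_le hpq.le (min_le_right _ _)⟩
  have hmq : max p (min u q) < q := max_lt hpq (min_lt_of_left_lt (lt_of_le_of_lt hu hcq))
  calc distortion p q u = logL (max p (min u q)) u q := by
        rw [distortion, max_eq_right hΦ, logL_sub_logL]
    _ < logL (max p (min u q)) t q := strictAnti_logL (hp.trans_le hm.1) hmq hq htu
    _ = logL p t q - logL p t (max p (min u q)) := (logL_sub_logL _ _ _ _).symm
    _ ≤ distortion p q t := sub_le_sub (le_max_right _ _)
        ((isLeast_logL_image_Icc hp hpq.le hq).2 (mem_image_of_mem _ hm))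

theorem distortion_strictMonoOn (hp : -1 < p) (hpq : p < q) (hq : q < 1) (hpc : p < c)
    (hc : logL p c q = 0) : StrictMonoOn (distortion p q) (Ici c) := by
  intro t ht u _ htu
  have hΦ : logL p t q ≤ 0 := hc ▸ (strictAnti_logL hp hpq hq).antitone ht
  have hm : max p (min t q) ∈ Icc p q := ⟨le_max_left _ _, max_le hpq.le (min_le_right _ _)⟩
  have hpm : p < max p (min t q) := lt_max_of_lt_right (lt_min (hpc.trans_le ht) hpq)
  calc distortion p q t = 0 - logL p t (max p (min t q)) := by
        rw [distortion, max_eq_left hΦ]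
    _ < 0 - logL p u (max p (min t q)) :=
        sub_lt_sub_left (strictAnti_logL hp hpm (hm.2.trans_lt hq) htu) 0
    _ ≤ distortion p q u := sub_le_sub (le_max_left _ _)
        ((isLeast_logL_image_Icc hp hpq.le hq).2 (mem_image_of_mem _ hm))

end Distortion

theorem isMinOn_Ioo_iff_of_strictAntiOn_of_strictMonoOn {α β : Type*} [LinearOrder α]
    [DenselyOrdered α] [Preorder β] {f : α → β} {a b c x : α} (hanti : StrictAntiOn f (Iic c))
    (hmono : StrictMonoOn f (Ici c)) (hcb : c < b) (hx : x ∈ Ioo a b) :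
    IsMinOn f (Ioo a b) x ↔ x = c := by
  refine ⟨fun hmin ↦ ?_, ?_⟩
  · by_contra hxc
    rcases lt_or_gt_of_ne hxc with hlt | hgt
    · exact (hanti hlt.le le_rfl hlt).not_ge (hmin ⟨hx.1.trans hlt, hcb⟩)
    · obtain ⟨y, hy, hyx⟩ := exists_between (max_lt hx.1 hgt)
      exact (hmono (le_of_max_le_right hy.le) hgt.le hyx).not_ge
        (hmin ⟨(le_max_left a c).trans_lt hy, hyx.trans hx.2⟩)
  · rintro rfl y -
    rcases le_total y x with hyx | hxy
    exacts [hanti.antitoneOn hyx le_rfl hyx, hmono.monotoneOn le_rfl hxy hxy]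

theorem sin_image_Ioo_zero_pi_div_two : sin '' Ioo 0 (π / 2) = Ioo 0 1 := by
  ext s
  constructor
  · rintro ⟨α, hα, rfl⟩
    exact ⟨sin_pos_of_pos_of_lt_pi hα.1 (by linarith [hα.2, pi_pos]),
      (mapsTo_sin_Ioo ⟨by linarith [hα.1, pi_pos], hα.2⟩).2⟩
  · intro hs
    exact ⟨arcsin s, ⟨arcsin_pos.2 hs.1, arcsin_lt_pi_div_two.2 hs.2⟩,
      sin_arcsin (by linarith [hs.1]) hs.2.le⟩

theorem optimal_iff_isometric_on_boundary (ρ₁ ρ₂ α₀ : ℝ)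
    (h1 : -1 < ρ₁) (h2 : ρ₁ < ρ₂) (h3 : ρ₂ < 1) (hα₀ : α₀ ∈ Set.Ioo 0 (π / 2)) :
    ((∀ α ∈ Set.Ioo 0 (π / 2), δ ρ₁ ρ₂ α₀ ρ₁ ≤ δ ρ₁ ρ₂ α ρ₁) ↔ L ρ₂ α₀ ρ₁ = 1) ∧
    (L ρ₂ α₀ ρ₁ = 1 → ρ₁ < Real.sin α₀ ∧ Real.sin α₀ < ρ₂) := by
  obtain ⟨c, ⟨hpc, hcq⟩, hc⟩ := exists_logL_eq_zero h1 h2 h3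
  have hsin : sin α₀ ∈ Ioo 0 1 := sin_image_Ioo_zero_pi_div_two ▸ mem_image_of_mem sin hα₀
  have hL : L ρ₂ α₀ ρ₁ = 1 ↔ sin α₀ = c := by
    rw [L_eq_exp_logL α₀ ⟨h1, h2.trans h3⟩ ⟨h1.trans h2, h3⟩, exp_eq_one_iff, ← hc,
      (strictAnti_logL h1 h2 h3).injective.eq_iff]
  have hmin : (∀ α ∈ Ioo 0 (π / 2), δ ρ₁ ρ₂ α₀ ρ₁ ≤ δ ρ₁ ρ₂ α ρ₁) ↔
      IsMinOn (distortion ρ₁ ρ₂) (Ioo 0 1) (sin α₀) := by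
    simp only [δ_eq_distortion h1 h2 h3, isMinOn_iff, ← sin_image_Ioo_zero_pi_div_two,
      forall_mem_image]
  rw [hmin, hL, isMinOn_Ioo_iff_of_strictAntiOn_of_strictMonoOn
    (distortion_strictAntiOn h1 h2 h3 hcq hc) (distortion_strictMonoOn h1 h2 h3 hpc hc)
    (hcq.trans h3) hsin]
  exact ⟨Iff.rfl, fun h ↦ h ▸ ⟨hpc, hcq⟩⟩
end

section
/- Let -1 < ρ₁ < ρ₂ < 1, let Λ(ρ, α, ρ₁) = ((1-ρ₁)^{1-sin α}(1+ρ₁)^{1+sin α})/((1-ρ)^{1-sin α}(1+ρ)^{1+sin α}), and suppose α₀ ∈ (0, π/2) satisfies Λ(ρ₂, α₀, ρ₁) = 1. Then Λ(ρ, α₀, ρ₁) < 1 for all ρ with ρ₁ < ρ < ρ₂. -/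
open Real

/-!
Taking logarithms, `Λ(ρ, α, ρ₁) = exp (L ρ₁ - L ρ)` with
`L x = (1 - sin α) log (1 - x) + (1 + sin α) log (1 + x)`, a nonnegative combination of two
strictly concave functions with weights summing to `2`, hence strictly concave on `(-1, 1)`.
The hypothesis `Λ(ρ₂, α₀, ρ₁) = 1` says `L ρ₁ = L ρ₂`, and strict concavity puts `L` strictly
above this common value on the open interval between `ρ₁` and `ρ₂`.
-/

/-- `Λ(ρ,α,ρ₁) = ((1-ρ₁)^{1-sin α}(1+ρ₁)^{1+sin α})/((1-ρ)^{1-sin α}(1+ρ)^{1+sin α})`. -/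
noncomputable def Lambda (ρ α ρ₁ : ℝ) : ℝ :=
  ((1 - ρ₁) ^ (1 - Real.sin α) * (1 + ρ₁) ^ (1 + Real.sin α)) /
    ((1 - ρ) ^ (1 - Real.sin α) * (1 + ρ) ^ (1 + Real.sin α))

open Set

theorem strictConcaveOn_mul_log_one_sub_add_mul_log_one_add {a b : ℝ} (ha : 0 ≤ a) (hb : 0 ≤ b)
    (hab : 0 < a + b) :
    StrictConcaveOn ℝ (Ioo (-1) 1) fun x => a * log (1 - x) + b * log (1 + x) := by
  refine ⟨convex_Ioo _ _, fun x hx y hy hxy p q hp hq hpq => ?_⟩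
  have hsub : p * log (1 - x) + q * log (1 - y) < log (1 - (p * x + q * y)) := by
    have := strictConcaveOn_log_Ioi.2 (mem_Ioi.2 (sub_pos.2 hx.2)) (mem_Ioi.2 (sub_pos.2 hy.2))
      (by contrapose! hxy; linarith) hp hq hpq
    simp only [smul_eq_mul] at this
    rwa [show p * (1 - x) + q * (1 - y) = 1 - (p * x + q * y) by linear_combination hpq] at this
  have hadd : p * log (1 + x) + q * log (1 + y) < log (1 + (p * x + q * y)) := by
    have := strictConcaveOn_log_Ioi.2 (mem_Ioi.2 (neg_lt_iff_pos_add'.1 hx.1))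
      (mem_Ioi.2 (neg_lt_iff_pos_add'.1 hy.1)) (by contrapose! hxy; linarith) hp hq hpq
    simp only [smul_eq_mul] at this
    rwa [show p * (1 + x) + q * (1 + y) = 1 + (p * x + q * y) by linear_combination hpq] at this
  have hgain : 0 < a * (log (1 - (p * x + q * y)) - (p * log (1 - x) + q * log (1 - y)))
      + b * (log (1 + (p * x + q * y)) - (p * log (1 + x) + q * log (1 + y))) := by
    rcases ha.eq_or_lt with rfl | ha
    · simpa using mul_pos (by linarith : 0 < b) (sub_pos.2 hadd)
    · exact add_pos_of_pos_of_nonneg (mul_pos ha (sub_pos.2 hsub))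
        (mul_nonneg hb (sub_pos.2 hadd).le)
  simp only [smul_eq_mul]
  linarith

noncomputable def logDenom (α x : ℝ) : ℝ :=
  (1 - sin α) * log (1 - x) + (1 + sin α) * log (1 + x)

theorem strictConcaveOn_logDenom (α : ℝ) : StrictConcaveOn ℝ (Ioo (-1) 1) (logDenom α) :=
  strictConcaveOn_mul_log_one_sub_add_mul_log_one_add (by linarith [sin_le_one α])
    (by linarith [neg_one_le_sin α]) (by linarith)

theorem exp_logDenom (α : ℝ) {x : ℝ} (hx : x ∈ Ioo (-1) 1) :
    exp (logDenom α x) = (1 - x) ^ (1 - sin α) * (1 + x) ^ (1 + sin α) := by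
  have h₁ : 0 < 1 - x := sub_pos.2 hx.2
  have h₂ : 0 < 1 + x := neg_lt_iff_pos_add'.1 hx.1
  rw [logDenom, exp_add, ← log_rpow h₁, ← log_rpow h₂, exp_log (by positivity),
    exp_log (by positivity)]

theorem Lambda_eq_exp_logDenom {ρ α ρ₁ : ℝ} (hρ : ρ ∈ Ioo (-1) 1) (hρ₁ : ρ₁ ∈ Ioo (-1) 1) :
    Lambda ρ α ρ₁ = exp (logDenom α ρ₁ - logDenom α ρ) := by
  rw [Lambda, exp_sub, exp_logDenom α hρ, exp_logDenom α hρ₁]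

theorem Lambda_lt_one_between_general (ρ₁ ρ₂ α₀ : ℝ)
    (h1 : -1 < ρ₁) (h2 : ρ₁ < ρ₂) (h3 : ρ₂ < 1)
    (hroot : Lambda ρ₂ α₀ ρ₁ = 1) :
    ∀ ρ : ℝ, ρ₁ < ρ → ρ < ρ₂ → Lambda ρ α₀ ρ₁ < 1 := by
  intro ρ hρ₁ hρ₂
  have mem : ∀ x, ρ₁ ≤ x → x ≤ ρ₂ → x ∈ Ioo (-1 : ℝ) 1 :=
    fun x hl hr => ⟨by linarith, by linarith⟩
  have mem₁ := mem ρ₁ le_rfl h2.le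
  have mem₂ := mem ρ₂ h2.le le_rfl
  have hflat : logDenom α₀ ρ₂ = logDenom α₀ ρ₁ := by
    rwa [Lambda_eq_exp_logDenom mem₂ mem₁, exp_eq_one_iff, sub_eq_zero, eq_comm] at hroot
  have hlt : min (logDenom α₀ ρ₁) (logDenom α₀ ρ₂) < logDenom α₀ ρ :=
    (strictConcaveOn_logDenom α₀).lt_on_openSegment mem₁ mem₂ h2.ne
      (by rw [openSegment_eq_Ioo h2]; exact ⟨hρ₁, hρ₂⟩)
  rw [hflat, min_self] at hlt
  rwa [Lambda_eq_exp_logDenom (mem ρ hρ₁.le hρ₂.le) mem₁, exp_lt_one_iff, sub_neg]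

theorem Lambda_lt_one_between (ρ₁ ρ₂ α₀ : ℝ)
    (h1 : -1 < ρ₁) (h2 : ρ₁ < ρ₂) (h3 : ρ₂ < 1) (hα₀ : α₀ ∈ Set.Ioo 0 (π / 2))
    (hroot : Lambda ρ₂ α₀ ρ₁ = 1) :
    ∀ ρ : ℝ, ρ₁ < ρ → ρ < ρ₂ → Lambda ρ α₀ ρ₁ < 1 :=
  Lambda_lt_one_between_general ρ₁ ρ₂ α₀ h1 h2 h3 hroot
end
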